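/- Suppose F, f : ℝ^m × ℝ^n → ℝ are continuously differentiable and bounded below, μ, θ, σ > 0, and P_σ : ℝ → ℝ is nonnegative, nondecreasing and continuously differentiable. Fix x̄ ∈ ℝ^m and suppose both argmin_{y} ( f(x̄,y) + (μ/2)‖y‖² ) = {z*} and argmin_{y} ( F(x̄,y) + P_σ( f(x̄,y) − f_μ*(x̄) ) + (θ/2)‖y‖² ) = {y*} are singletons. Then φ_{μ,θ,σ} is (Fréchet) differentiable at x̄ with gradient ∇φ_{μ,θ,σ}(x̄) = ∇_x F(x̄, y*) + P_σ'( f(x̄,y*) − f_μ*(x̄) ) · ( ∇_x f(x̄, y*) − ∇_x f(x̄, z*) ), where f_μ*(x̄) = f(x̄, z*) + (μ/2)‖z*‖² and ∇f_μ*(x̄) = ∇_x f(x̄, z*). -/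

import Mathlib

open Filter Topology

noncomputable section

/-- `ℝ^m` as a Euclidean space. -/
abbrev Evec (m : ℕ) := EuclideanSpace ℝ (Fin m)

/-- The regularized lower-level value function
`f_μ*(x) = inf_y ( f(x,y) + (μ/2)‖y‖² )`. -/
def fmuStar {m n : ℕ} (f : Evec m → Evec n → ℝ) (μ : ℝ) (x : Evec m) : ℝ :=
  sInf (Set.range fun y : Evec n => f x y + μ / 2 * ‖y‖ ^ 2)

/-- The approximate value function
`φ_{μ,θ,σ}(x) = inf_y ( F(x,y) + P_σ( f(x,y) − f_μ*(x) ) + (θ/2)‖y‖² )`. -/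
def phiReg {m n : ℕ} (F f : Evec m → Evec n → ℝ) (P : ℝ → ℝ) (μ θ : ℝ)
    (x : Evec m) : ℝ :=
  sInf (Set.range fun y : Evec n =>
    F x y + P (f x y - fmuStar f μ x) + θ / 2 * ‖y‖ ^ 2)

end

noncomputable section Danskin

set_option linter.unusedSectionVars false

variable {E : Type*} [NormedAddCommGroup E] [NormedSpace ℝ E] {n : ℕ}

/-- Existence of minimizers for a coercive continuous function. -/
lemma danskin_exists_min (g : E → Evec n → ℝ)
    (hgc : Continuous fun p : E × Evec n => g p.1 p.2)
    (c ρ : ℝ) (hρ : 0 < ρ) (hbd : ∀ x y, c + ρ / 2 * ‖y‖ ^ 2 ≤ g x y) (x : E) :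
    ∃ y : Evec n, ∀ y', g x y ≤ g x y' := by
  have hcont : Continuous (g x) := hgc.comp (Continuous.prodMk_right x)
  apply hcont.exists_forall_le
  have h1 : Tendsto (fun y : Evec n => c + ρ / 2 * ‖y‖ ^ 2) (cocompact (Evec n)) atTop := by
    have hn : Tendsto (fun y : Evec n => ‖y‖) (cocompact (Evec n)) atTop :=
      tendsto_norm_cocompact_atTop
    apply tendsto_atTop_add_const_left
    apply (tendsto_const_mul_atTop_of_pos (by positivity)).2
    exact (tendsto_pow_atTop (by norm_num)).comp hn
  exact tendsto_atTop_mono (fun y => hbd x y) h1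

/-- Stability of minimizers: minimizers at parameters near `xbar` are near `ystar`. -/
lemma danskin_minimizers_converge (g : E → Evec n → ℝ)
    (hgc : Continuous fun p : E × Evec n => g p.1 p.2)
    (c ρ : ℝ) (hρ : 0 < ρ) (hbd : ∀ x y, c + ρ / 2 * ‖y‖ ^ 2 ≤ g x y)
    (xbar : E) (ystar : Evec n)
    (huniq : ∀ y : Evec n, (∀ y', g xbar y ≤ g xbar y') → y = ystar)
    {ε : ℝ} (hε : 0 < ε) :
    ∃ δ > 0, ∀ x : E, ‖x - xbar‖ < δ →
      ∀ y : Evec n, (∀ y', g x y ≤ g x y') → ‖y - ystar‖ < ε := by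
  by_contra hcon
  push_neg at hcon
  have hc1 : ContinuousAt (fun x => g x ystar) xbar :=
    (hgc.comp (continuous_id.prodMk continuous_const)).continuousAt
  obtain ⟨δ₀, hδ₀pos, hδ₀⟩ : ∃ δ₀ > 0, ∀ x : E, dist x xbar < δ₀ →
      dist (g x ystar) (g xbar ystar) < 1 :=
    Metric.continuousAt_iff.mp hc1 1 one_pos
  have hseq : ∀ k : ℕ, ∃ x : E, ‖x - xbar‖ < min δ₀ (1 / (k + 1)) ∧
      ∃ y : Evec n, (∀ y', g x y ≤ g x y') ∧ ε ≤ ‖y - ystar‖ := by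
    intro k
    obtain ⟨x, hx, y, hy, hyd⟩ := hcon (min δ₀ (1 / (k + 1)))
      (lt_min hδ₀pos (by positivity))
    exact ⟨x, hx, y, hy, hyd⟩
  choose x hx y hymin hyd using hseq
  set M := g xbar ystar + 1 with hM
  have hxδ₀ : ∀ k, dist (x k) xbar < δ₀ := fun k => by
    rw [dist_eq_norm]; exact (hx k).trans_le (min_le_left _ _)
  have hbound : ∀ k, ‖y k‖ ^ 2 ≤ (M - c) * 2 / ρ := by
    intro k
    have h1 : c + ρ / 2 * ‖y k‖ ^ 2 ≤ g (x k) (y k) := hbd _ _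
    have h2 : g (x k) (y k) ≤ g (x k) ystar := hymin k ystar
    have h3 : g (x k) ystar < M := by
      have := hδ₀ (x k) (hxδ₀ k)
      rw [Real.dist_eq] at this
      linarith [abs_lt.mp this]
    rw [le_div_iff₀ hρ]
    nlinarith
  set R := Real.sqrt ((M - c) * 2 / ρ) with hR
  have hymem : ∀ k, y k ∈ Metric.closedBall (0 : Evec n) R := by
    intro k
    simp only [Metric.mem_closedBall, dist_zero_right]
    rw [hR]
    have hb := hbound k
    exact (Real.le_sqrt (norm_nonneg _) ((sq_nonneg _).trans hb)).mpr hb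
  obtain ⟨ylim, _, φ, hφ, hconv⟩ :=
    (isCompact_closedBall (0 : Evec n) R).tendsto_subseq hymem
  have hxtendsto : Tendsto x atTop (𝓝 xbar) := by
    rw [tendsto_iff_norm_sub_tendsto_zero]
    apply squeeze_zero (fun k => norm_nonneg _)
      (fun k => le_of_lt ((hx k).trans_le (min_le_right _ _)))
    exact tendsto_one_div_add_atTop_nhds_zero_nat
  have hxφ : Tendsto (x ∘ φ) atTop (𝓝 xbar) := hxtendsto.comp hφ.tendsto_atTop
  have hylimmin : ∀ y', g xbar ylim ≤ g xbar y' := by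
    intro y'
    have hpair : Tendsto (fun j => (x (φ j), y (φ j))) atTop (𝓝 (xbar, ylim)) :=
      hxφ.prodMk_nhds hconv
    have hL : Tendsto (fun j => g (x (φ j)) (y (φ j))) atTop (𝓝 (g xbar ylim)) :=
      (hgc.continuousAt (x := (xbar, ylim))).tendsto.comp hpair
    have hR' : Tendsto (fun j => g (x (φ j)) y') atTop (𝓝 (g xbar y')) := by
      have hpair' : Tendsto (fun j => (x (φ j), y')) atTop (𝓝 (xbar, y')) :=
        hxφ.prodMk_nhds tendsto_const_nhds
      exact (hgc.continuousAt (x := (xbar, y'))).tendsto.comp hpair'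
    exact le_of_tendsto_of_tendsto' hL hR' (fun j => hymin (φ j) y')
  have hys : ylim = ystar := huniq ylim hylimmin
  have hεle : ε ≤ ‖ylim - ystar‖ := by
    have hnorm : Tendsto (fun j => ‖y (φ j) - ystar‖) atTop (𝓝 ‖ylim - ystar‖) :=
      (continuous_norm.comp (continuous_id.sub continuous_const)).continuousAt.tendsto.comp hconv
    exact le_of_tendsto_of_tendsto' tendsto_const_nhds hnorm (fun j => hyd (φ j))
  rw [hys, sub_self, norm_zero] at hεle
  linarith

/-- Danskin's theorem: differentiability of the value function at a point with a
unique minimizer. -/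
theorem danskin (g : E → Evec n → ℝ)
    (hg : ContDiff ℝ 1 fun p : E × Evec n => g p.1 p.2)
    (c ρ : ℝ) (hρ : 0 < ρ) (hbd : ∀ x y, c + ρ / 2 * ‖y‖ ^ 2 ≤ g x y)
    (xbar : E) (ystar : Evec n)
    (hmin : ∀ y', g xbar ystar ≤ g xbar y')
    (huniq : ∀ y : Evec n, (∀ y', g xbar y ≤ g xbar y') → y = ystar) :
    HasFDerivAt (fun x => sInf (Set.range (g x)))
      (fderiv ℝ (fun x => g x ystar) xbar) xbar := by
  have hgc : Continuous fun p : E × Evec n => g p.1 p.2 := hg.continuous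
  set G : E × Evec n → ℝ := fun p => g p.1 p.2 with hG
  have hGdiff : Differentiable ℝ G := hg.differentiable one_ne_zero
  set D : E × Evec n → E →L[ℝ] ℝ :=
    fun p => (fderiv ℝ G p).comp (ContinuousLinearMap.inl ℝ E (Evec n)) with hDdef
  have hDcont : Continuous D :=
    (hg.continuous_fderiv one_ne_zero).clm_comp continuous_const
  have hpartial : ∀ (x : E) (y : Evec n), HasFDerivAt (fun u => g u y) (D (x, y)) x := by
    intro x y
    have h1 : HasFDerivAt G (fderiv ℝ G (x, y)) (x, y) := (hGdiff _).hasFDerivAt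
    have h2 : HasFDerivAt (fun u : E => (u, y))
        (ContinuousLinearMap.inl ℝ E (Evec n)) x := hasFDerivAt_prodMk_left x y
    exact h1.comp x h2
  have hAeq : fderiv ℝ (fun x => g x ystar) xbar = D (xbar, ystar) :=
    (hpartial xbar ystar).fderiv
  rw [hAeq]
  set A := D (xbar, ystar) with hAdef
  have hbdd : ∀ x : E, BddBelow (Set.range (g x)) := fun x =>
    ⟨c, by rintro _ ⟨y', rfl⟩; nlinarith [hbd x y', sq_nonneg ‖y'‖]⟩
  set v : E → ℝ := fun x => sInf (Set.range (g x)) with hvdef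
  have hvx : ∀ (x : E) (y : Evec n), (∀ y', g x y ≤ g x y') → v x = g x y := by
    intro x y hy
    exact le_antisymm (csInf_le (hbdd x) ⟨y, rfl⟩)
      (le_csInf (Set.range_nonempty _) (by rintro _ ⟨y', rfl⟩; exact hy y'))
  have hvbar : v xbar = g xbar ystar := hvx xbar ystar hmin
  rw [hasFDerivAt_iff_isLittleO_nhds_zero, Asymptotics.isLittleO_iff]
  intro ε hε
  obtain ⟨δ₁, hδ₁pos, hδ₁⟩ : ∃ δ₁ > 0, ∀ (u : E) (y : Evec n),
      ‖u - xbar‖ < δ₁ → ‖y - ystar‖ < δ₁ → ‖D (u, y) - A‖ ≤ ε := by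
    obtain ⟨δ₁, h1, h2⟩ := Metric.continuousAt_iff.mp
      (hDcont.continuousAt (x := (xbar, ystar))) ε hε
    refine ⟨δ₁, h1, fun u y hu hy => ?_⟩
    have hd : dist (u, y) (xbar, ystar) < δ₁ := by
      rw [Prod.dist_eq]
      exact max_lt (by rwa [dist_eq_norm]) (by rwa [dist_eq_norm])
    have := h2 hd
    rw [dist_eq_norm] at this
    exact this.le
  obtain ⟨δ₂, hδ₂pos, hδ₂⟩ :=
    danskin_minimizers_converge g hgc c ρ hρ hbd xbar ystar huniq hδ₁pos
  rw [Metric.eventually_nhds_iff]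
  refine ⟨min δ₁ δ₂, lt_min hδ₁pos hδ₂pos, fun h hh => ?_⟩
  set x' : E := xbar + h with hx'def
  have hxx : x' - xbar = h := add_sub_cancel_left xbar h
  have hx' : ‖x' - xbar‖ < min δ₁ δ₂ := by
    rw [hxx]; simpa [dist_eq_norm] using hh
  show ‖v x' - v xbar - A h‖ ≤ ε * ‖h‖
  rw [← hxx]
  set s : Set E := Metric.ball xbar (min δ₁ δ₂) with hsdef
  have hxbars : xbar ∈ s := Metric.mem_ball_self (lt_min hδ₁pos hδ₂pos)
  have hx's : x' ∈ s := by rwa [hsdef, Metric.mem_ball, dist_eq_norm]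
  have key : ∀ y : Evec n, ‖y - ystar‖ < δ₁ →
      |g x' y - g xbar y - A (x' - xbar)| ≤ ε * ‖x' - xbar‖ := by
    intro y hy
    have hder : ∀ u ∈ s, HasFDerivWithinAt (fun u => g u y - A u) (D (u, y) - A) s u :=
      fun u _ => ((hpartial u y).sub A.hasFDerivAt).hasFDerivWithinAt
    have hbound : ∀ u ∈ s, ‖D (u, y) - A‖ ≤ ε := by
      intro u hu
      rw [hsdef, Metric.mem_ball, dist_eq_norm] at hu
      exact hδ₁ u y (hu.trans_le (min_le_left _ _)) hy
    have hmvt := (convex_ball xbar (min δ₁ δ₂)).norm_image_sub_le_of_norm_hasFDerivWithin_le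
      hder hbound hxbars hx's
    have heq : g x' y - A x' - (g xbar y - A xbar) = g x' y - g xbar y - A (x' - xbar) := by
      rw [map_sub]; ring
    rw [Real.norm_eq_abs] at hmvt
    rw [← heq]
    exact hmvt.trans_eq rfl
  have hub := key ystar (by simpa using hδ₁pos)
  obtain ⟨y', hy'⟩ := danskin_exists_min g hgc c ρ hρ hbd x'
  have hvx' : v x' = g x' y' := hvx x' y' hy'
  have hy'close : ‖y' - ystar‖ < δ₁ :=
    hδ₂ x' (hx'.trans_le (min_le_right _ _)) y' hy'
  have hlb := key y' hy'close
  have hvle : v x' ≤ g x' ystar := csInf_le (hbdd x') ⟨ystar, rfl⟩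
  have hvbarle : v xbar ≤ g xbar y' := csInf_le (hbdd xbar) ⟨y', rfl⟩
  rw [Real.norm_eq_abs, abs_le]
  obtain ⟨hub1, hub2⟩ := abs_le.mp hub
  obtain ⟨hlb1, hlb2⟩ := abs_le.mp hlb
  constructor
  · rw [hvx']; linarith
  · rw [hvbar] at *; linarith

end Danskin

set_option maxHeartbeats 2000000 in
theorem gradient_of_approximate_value_function
    {m n : ℕ} (F f : Evec m → Evec n → ℝ)
    (hF : ContDiff ℝ 1 fun p : Evec m × Evec n => F p.1 p.2)
    (hf : ContDiff ℝ 1 fun p : Evec m × Evec n => f p.1 p.2)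
    (hFbd : ∃ c : ℝ, ∀ x y, c ≤ F x y)
    (hfbd : ∃ c : ℝ, ∀ x y, c ≤ f x y)
    (μ θ σ : ℝ) (hμ : 0 < μ) (hθ : 0 < θ) (hσ : 0 < σ)
    (P : ℝ → ℝ) (hPnn : ∀ ω, 0 ≤ P ω) (hPmono : Monotone P) (hPC1 : ContDiff ℝ 1 P)
    (xbar : Evec m) (zstar ystar : Evec n)
    (hz : {y : Evec n | ∀ y' : Evec n,
        f xbar y + μ / 2 * ‖y‖ ^ 2 ≤ f xbar y' + μ / 2 * ‖y'‖ ^ 2} = {zstar})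
    (hy : {y : Evec n | ∀ y' : Evec n,
        F xbar y + P (f xbar y - fmuStar f μ xbar) + θ / 2 * ‖y‖ ^ 2 ≤
          F xbar y' + P (f xbar y' - fmuStar f μ xbar) + θ / 2 * ‖y'‖ ^ 2} = {ystar}) :
    fmuStar f μ xbar = f xbar zstar + μ / 2 * ‖zstar‖ ^ 2 ∧
      HasGradientAt (fmuStar f μ) (gradient (fun x => f x zstar) xbar) xbar ∧
      HasGradientAt (phiReg F f P μ θ)
        (gradient (fun x => F x ystar) xbar +
          deriv P (f xbar ystar - fmuStar f μ xbar) •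
            (gradient (fun x => f x ystar) xbar - gradient (fun x => f x zstar) xbar))
        xbar := by
  obtain ⟨cf, hcf⟩ := hfbd
  obtain ⟨cF, hcF⟩ := hFbd
  -- The inner objective for the lower-level regularized problem
  set g₁ : Evec m → Evec n → ℝ := fun x y => f x y + μ / 2 * ‖y‖ ^ 2 with hg₁def
  have hg₁ : ContDiff ℝ 1 fun p : Evec m × Evec n => g₁ p.1 p.2 :=
    hf.add (contDiff_const.mul ((contDiff_norm_sq ℝ).comp contDiff_snd))
  have hbd₁ : ∀ x y, cf + μ / 2 * ‖y‖ ^ 2 ≤ g₁ x y := fun x y => by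
    have := hcf x y; simp only [hg₁def]; nlinarith
  have hzmem : ∀ y : Evec n, (∀ y', g₁ xbar y ≤ g₁ xbar y') ↔ y ∈ ({zstar} : Set (Evec n)) := by
    intro y; rw [← hz]; exact Iff.rfl
  have hminz : ∀ y', g₁ xbar zstar ≤ g₁ xbar y' := (hzmem zstar).mpr rfl
  have huniqz : ∀ y : Evec n, (∀ y', g₁ xbar y ≤ g₁ xbar y') → y = zstar :=
    fun y hy' => (hzmem y).mp hy'
  -- Danskin for fmuStar
  have hv0 := danskin g₁ hg₁ cf μ hμ hbd₁ xbar zstar hminz huniqz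
  -- identify derivatives
  have hdfz : DifferentiableAt ℝ (fun x => f x zstar) xbar := by
    have := ((hf.differentiable one_ne_zero) (xbar, zstar)).comp xbar
      ((differentiableAt_id (𝕜 := ℝ) (x := xbar)).prodMk (differentiableAt_const zstar))
    exact this
  set Az : Evec m →L[ℝ] ℝ := fderiv ℝ (fun x => f x zstar) xbar with hAzdef
  have hAz1 : fderiv ℝ (fun x => g₁ x zstar) xbar = Az := by
    simp only [hg₁def, hAzdef]
    exact fderiv_add_const _
  rw [hAz1] at hv0
  have hv : HasFDerivAt (fmuStar f μ) Az xbar := hv0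
  -- Part 1
  have hpart1 : fmuStar f μ xbar = f xbar zstar + μ / 2 * ‖zstar‖ ^ 2 := by
    apply le_antisymm
    · exact csInf_le ⟨cf, by rintro _ ⟨y', rfl⟩; nlinarith [hcf xbar y', sq_nonneg ‖y'‖]⟩
        ⟨zstar, rfl⟩
    · exact le_csInf (Set.range_nonempty _) (by rintro _ ⟨y', rfl⟩; exact hminz y')
  -- Part 2
  have hpart2 : HasGradientAt (fmuStar f μ) (gradient (fun x => f x zstar) xbar) xbar := by
    rw [hasGradientAt_iff_hasFDerivAt, gradient,
      LinearIsometryEquiv.apply_symm_apply]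
    exact hv
  refine ⟨hpart1, hpart2, ?_⟩
  -- Part 3: the outer problem with parameter (x, s)
  set vb : ℝ := fmuStar f μ xbar with hvbdef
  set g₂ : (Evec m × ℝ) → Evec n → ℝ :=
    fun q y => F q.1 y + P (f q.1 y - q.2) + θ / 2 * ‖y‖ ^ 2 with hg₂def
  have hq : ContDiff ℝ 1 fun p : (Evec m × ℝ) × Evec n => (p.1.1, p.2) :=
    (contDiff_fst.comp contDiff_fst).prodMk contDiff_snd
  have hg₂ : ContDiff ℝ 1 fun p : (Evec m × ℝ) × Evec n => g₂ p.1 p.2 := by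
    refine ContDiff.add (ContDiff.add ?_ ?_) ?_
    · exact hF.comp hq
    · exact hPC1.comp ((hf.comp hq).sub (contDiff_snd.comp contDiff_fst))
    · exact contDiff_const.mul ((contDiff_norm_sq ℝ).comp contDiff_snd)
  have hbd₂ : ∀ q y, cF + θ / 2 * ‖y‖ ^ 2 ≤ g₂ q y := fun q y => by
    have h1 := hcF q.1 y
    have h2 := hPnn (f q.1 y - q.2)
    simp only [hg₂def]; nlinarith
  have hymem : ∀ y : Evec n, (∀ y', g₂ (xbar, vb) y ≤ g₂ (xbar, vb) y') ↔
      y ∈ ({ystar} : Set (Evec n)) := by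
    intro y; rw [← hy]; exact Iff.rfl
  have hminy : ∀ y', g₂ (xbar, vb) ystar ≤ g₂ (xbar, vb) y' := (hymem ystar).mpr rfl
  have huniqy : ∀ y : Evec n, (∀ y', g₂ (xbar, vb) y ≤ g₂ (xbar, vb) y') → y = ystar :=
    fun y hy' => (hymem y).mp hy'
  have hψ := danskin g₂ hg₂ cF θ hθ hbd₂ (xbar, vb) ystar hminy huniqy
  -- compute the derivative of q ↦ g₂ q ystar at (xbar, vb)
  set AF : Evec m →L[ℝ] ℝ := fderiv ℝ (fun x => F x ystar) xbar with hAFdef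
  set Af : Evec m →L[ℝ] ℝ := fderiv ℝ (fun x => f x ystar) xbar with hAfdef
  set p' : ℝ := deriv P (f xbar ystar - vb) with hp'def
  have hdFy : DifferentiableAt ℝ (fun x => F x ystar) xbar := by
    have := ((hF.differentiable one_ne_zero) (xbar, ystar)).comp xbar
      ((differentiableAt_id (𝕜 := ℝ) (x := xbar)).prodMk (differentiableAt_const ystar))
    exact this
  have hdfy : DifferentiableAt ℝ (fun x => f x ystar) xbar := by
    have := ((hf.differentiable one_ne_zero) (xbar, ystar)).comp xbar
      ((differentiableAt_id (𝕜 := ℝ) (x := xbar)).prodMk (differentiableAt_const ystar))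
    exact this
  have hF1 : HasFDerivAt (fun x => F x ystar) AF xbar := hdFy.hasFDerivAt
  have hf1 : HasFDerivAt (fun x => f x ystar) Af xbar := hdfy.hasFDerivAt
  set fst' : (Evec m × ℝ) →L[ℝ] Evec m := ContinuousLinearMap.fst ℝ (Evec m) ℝ with hfst'
  set snd' : (Evec m × ℝ) →L[ℝ] ℝ := ContinuousLinearMap.snd ℝ (Evec m) ℝ with hsnd'
  have h1 : HasFDerivAt (fun q : Evec m × ℝ => F q.1 ystar) (AF.comp fst') (xbar, vb) := by
    have := hF1.comp (xbar, vb) (hasFDerivAt_fst (𝕜 := ℝ) (p := (xbar, vb)))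
    exact this
  have h2 : HasFDerivAt (fun q : Evec m × ℝ => f q.1 ystar - q.2)
      (Af.comp fst' - snd') (xbar, vb) := by
    have := (hf1.comp (xbar, vb) (hasFDerivAt_fst (𝕜 := ℝ) (p := (xbar, vb)))).sub
      (hasFDerivAt_snd (𝕜 := ℝ) (p := (xbar, vb)))
    exact this
  have hP1 : HasDerivAt P p' (f xbar ystar - vb) :=
    ((hPC1.differentiable one_ne_zero) _).hasDerivAt
  have h3 : HasFDerivAt (fun q : Evec m × ℝ => P (f q.1 ystar - q.2))
      (p' • (Af.comp fst' - snd')) (xbar, vb) :=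
    hP1.comp_hasFDerivAt (xbar, vb) h2
  set Lt : (Evec m × ℝ) →L[ℝ] ℝ := AF.comp fst' + p' • (Af.comp fst' - snd') with hLt
  have hLtot : HasFDerivAt (fun q : Evec m × ℝ => g₂ q ystar) Lt (xbar, vb) :=
    (h1.add h3).add_const _
  have hψ' : HasFDerivAt (fun q : Evec m × ℝ => sInf (Set.range (g₂ q))) Lt (xbar, vb) := by
    rwa [hLtot.fderiv] at hψ
  -- chain rule
  have hpairv : HasFDerivAt (fun x : Evec m => (x, fmuStar f μ x))
      ((ContinuousLinearMap.id ℝ (Evec m)).prod Az) xbar :=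
    (hasFDerivAt_id xbar).prodMk hv
  have hφ : HasFDerivAt (phiReg F f P μ θ)
      (Lt.comp ((ContinuousLinearMap.id ℝ (Evec m)).prod Az)) xbar := by
    have := hψ'.comp xbar hpairv
    exact this
  -- identify the gradient
  rw [hasGradientAt_iff_hasFDerivAt]
  refine hφ.congr_fderiv ?_
  symm
  apply ContinuousLinearMap.ext
  intro u
  have e1 : (InnerProductSpace.toDual ℝ (Evec m)) (gradient (fun x => F x ystar) xbar) = AF := by
    rw [gradient, LinearIsometryEquiv.apply_symm_apply]
  have e2 : (InnerProductSpace.toDual ℝ (Evec m)) (gradient (fun x => f x ystar) xbar) = Af := by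
    rw [gradient, LinearIsometryEquiv.apply_symm_apply]
  have e3 : (InnerProductSpace.toDual ℝ (Evec m)) (gradient (fun x => f x zstar) xbar) = Az := by
    rw [gradient, LinearIsometryEquiv.apply_symm_apply]
  have lhs : (InnerProductSpace.toDual ℝ (Evec m))
      (gradient (fun x => F x ystar) xbar +
        p' • (gradient (fun x => f x ystar) xbar - gradient (fun x => f x zstar) xbar)) u
      = AF u + p' * (Af u - Az u) := by
    simp [map_add, map_sub, map_smul, e1, e2, e3]
  rw [lhs]
  simp only [hLt, hfst', hsnd', ContinuousLinearMap.comp_apply,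
    ContinuousLinearMap.add_apply, ContinuousLinearMap.smul_apply,
    ContinuousLinearMap.sub_apply, ContinuousLinearMap.coe_fst',
    ContinuousLinearMap.coe_snd', ContinuousLinearMap.prod_apply,
    ContinuousLinearMap.id_apply, smul_eq_mul]
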